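/- arXiv:0810.1705 — 2 statements merged into one kernel-verified Lean document; each statement's English description precedes it below -/
import Mathlib

section
/- Let N, r, k be integers with 1 ≤ r ≤ N and k ≥ 0, and let φ_ν = 2πν/N. Define the r×r symmetric matrix B^{(N)}_{k,r} with entries b_{μν} = U_k(cos(φ_μ − φ_ν)) for 0 ≤ μ, ν ≤ r−1 (so b_{νν} = k+1). Then B^{(N)}_{k,r} is positive semidefinite. -/
open Real

/-- Chebyshev polynomial of the second kind, evaluated at a real number. -/
noncomputable def chebU (k : ℕ) (x : ℝ) : ℝ := (Polynomial.Chebyshev.U ℝ (k : ℤ)).eval x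

/-- The matrix `B^{(N)}_{k,r}` with entries `U_k(cos(φ_μ - φ_ν))`, `φ_ν = 2πν/N`. -/
noncomputable def Bmat (N k r : ℕ) : Matrix (Fin r) (Fin r) ℝ :=
  fun μ ν => chebU k (Real.cos (2 * π * ((μ : ℝ) - (ν : ℝ)) / N))

/-- The matrix `M^{(N)}_{k,r} = I_r - N⁻¹ B^{(N)}_{k,r}`. -/
noncomputable def Mmat (N k r : ℕ) : Matrix (Fin r) (Fin r) ℝ :=
  1 - (N : ℝ)⁻¹ • Bmat N k r

/-!
`U_k(cos θ) = ∑_{j=0}^{k} cos((k - 2j)θ)`, and each kernel `cos(m(φ_μ - φ_ν))` is the Gram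
matrix `c cᵀ + s sᵀ` of the vectors `c_μ = cos(mφ_μ)`, `s_μ = sin(mφ_μ)`. Hence `B` is a sum
of positive semidefinite matrices.
-/

theorem chebU_add_two (k : ℕ) (x : ℝ) :
    chebU (k + 2) x = 2 * (Polynomial.Chebyshev.T ℝ (k + 2 : ℕ)).eval x + chebU k x := by
  rw [chebU, chebU, Nat.cast_add, Nat.cast_two, Polynomial.Chebyshev.U_eq_two_mul_T_add_U]
  simp

theorem chebU_cos_eq_sum_cos (k : ℕ) (θ : ℝ) :
    chebU k (cos θ) = ∑ j ∈ Finset.range (k + 1), cos ((k - 2 * j : ℝ) * θ) := by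
  induction k using Nat.twoStepInduction with
  | zero => simp [chebU]
  | one =>
    simp [chebU, Finset.sum_range_succ, show ((1 : ℝ) - 2) * θ = -θ by ring]
    ring
  | more k ih _ =>
    -- the outermost terms `j = 0` and `j = k + 2` are both `cos((k + 2)θ)`; the rest is the sum for `k`
    rw [chebU_add_two, Polynomial.Chebyshev.T_real_cos, ih]
    conv_rhs => rw [Finset.sum_range_succ', Finset.sum_range_succ]
    have hinner : ∀ j : ℕ,
        cos (((k + 2 : ℕ) - 2 * (j + 1 : ℕ) : ℝ) * θ) = cos ((k - 2 * j : ℝ) * θ) :=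
      fun j => by push_cast; ring_nf
    have hlast : cos ((k - 2 * (k + 1 : ℕ) : ℝ) * θ) = cos ((k + 2 : ℕ) * θ) := by
      rw [← cos_neg]; push_cast; ring_nf
    simp only [hinner, hlast, Int.cast_natCast, Nat.cast_zero, mul_zero, sub_zero]
    ring

section

open Matrix

variable {ι : Type*} [Finite ι]

theorem posSemidef_cos_sub (φ : ι → ℝ) : (of fun i j => cos (φ i - φ j)).PosSemidef := by
  have hgram : (of fun i j => cos (φ i - φ j)) =
      vecMulVec (cos ∘ φ) (star (cos ∘ φ)) + vecMulVec (sin ∘ φ) (star (sin ∘ φ)) := by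
    ext i j
    simp [vecMulVec_apply, cos_sub]
  rw [hgram]
  exact (posSemidef_vecMulVec_self_star _).add (posSemidef_vecMulVec_self_star _)

theorem posSemidef_chebU_cos_sub (k : ℕ) (φ : ι → ℝ) :
    (of fun i j => chebU k (cos (φ i - φ j))).PosSemidef := by
  have hsum : (of fun i j => chebU k (cos (φ i - φ j))) =
      ∑ m ∈ Finset.range (k + 1),
        of fun i j => cos ((k - 2 * m : ℝ) * φ i - (k - 2 * m : ℝ) * φ j) := by
    ext i j
    simp [Matrix.sum_apply, chebU_cos_eq_sum_cos, mul_sub]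
  rw [hsum]
  exact posSemidef_sum _ fun m _ => posSemidef_cos_sub _

end

theorem Bmat_posSemidef_general (N k r : ℕ) :
    (Bmat N k r).PosSemidef := by
  convert posSemidef_chebU_cos_sub k (fun μ : Fin r => 2 * π * μ / N) using 1
  ext μ ν
  simp [Bmat, mul_sub, sub_div]

theorem Bmat_posSemidef (N k r : ℕ) (hr : 1 ≤ r) (hrN : r ≤ N) :
    (Bmat N k r).PosSemidef :=
  Bmat_posSemidef_general N k r
end

section
/- Let η: [0,∞) → ℝ with η(t) = 1 for t ∈ [0,τ], 0 ≤ η ≤ 1, and η strictly decreasing on [τ,1], for some 0 < τ < 1. Define A^{(N)}_{k,r} = I_r − η(k/N) (I_r − M^{(N)}_{k,r}), where M^{(N)}_{k,r} = I_r − N^{-1}B^{(N)}_{k,r}. If 0 ≤ k, r ≤ N−1 and k + r < N, then A^{(N)}_{k,r} is positive definite and all its eigenvalues lie in (0,1]. -/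
open Real

/-- The matrix `A^{(N)}_{k,r} = I_r - η(k/N)(I_r - M^{(N)}_{k,r}) = I_r - η(k/N) N⁻¹ B^{(N)}_{k,r}`. -/
noncomputable def Amat (η : ℝ → ℝ) (N k r : ℕ) : Matrix (Fin r) (Fin r) ℝ :=
  1 - η ((k : ℝ) / N) • (1 - Mmat N k r)

/-!
With `ω = e^{2πi/N}` and `p(z) = ∑_μ x_μ z^μ`, the expansion `U_k(cos θ) = ∑_{j ≤ k} e^{(2j-k)iθ}`
turns the quadratic form of `B` into `xᵀ B x = ∑_{j ≤ k} |p(ω^{2j-k})|² ≥ 0`, so it suffices to show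
`xᵀ B x < N |x|²` for `x ≠ 0`; then `A = I - (η(k/N)/N) B` has `0 < xᵀ A x ≤ |x|²`.

For a primitive `n`-th root of unity `ζ` and `r ≤ n`, discrete Parseval gives
`∑_{j < n} |p(ζ^j)|² = n |x|²`, and omitting at least `r` of the points makes the sum strictly
smaller, because a nonzero `p` of degree `< r` cannot vanish at `r` distinct points. If `N` is odd,
or `N = 2m` with `k < m`, the `k + 1 ≤ N - r` points `ω^{2j-k}` are distinct `N`-th roots of unity.
If `N = 2m` and `k ≥ m`, they run once through `ω^{-k}` times all `m`-th roots of unity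
(contributing `m |x|²`) and then through `k + 1 - m ≤ m - r` of them again (contributing
less than `m |x|²`).
-/

open Polynomial Finset Matrix

theorem Polynomial.Chebyshev.U_eval_eq_pow_mul_geom_sum {R : Type*} [CommRing R] {u v x : R}
    (huv : u * v = 1) (hx : 2 * x = u + v) (k : ℕ) :
    (U R k).eval x = v ^ k * ∑ i ∈ range (k + 1), (u ^ 2) ^ i := by
  induction k using Nat.twoStepInduction with
  | zero => simp
  | one =>
    simp only [Nat.cast_one, U_one, eval_mul, eval_ofNat, eval_X, sum_range_succ, range_one,
      sum_singleton]
    linear_combination hx - u * huv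
  | more k ih₀ ih₁ =>
    push_cast at ih₁ ⊢
    rw [U_add_two, eval_sub, eval_mul, eval_mul, eval_X, eval_ofNat, ih₀, ih₁,
      sum_range_succ _ (k + 2), sum_range_succ _ (k + 1)]
    set g := ∑ i ∈ range (k + 1), (u ^ 2) ^ i
    linear_combination v ^ (k + 1) * (g + (u ^ 2) ^ (k + 1)) * hx
      - v ^ k * ((u ^ 2) ^ (k + 1) * u * v - g) * huv

lemma sq_norm_sum_eq_sum_sum_mul_conj {ι : Type*} (s : Finset ι) (f : ι → ℂ) :
    (‖∑ μ ∈ s, f μ‖ : ℂ) ^ 2 = ∑ μ ∈ s, ∑ ν ∈ s, f μ * starRingEnd ℂ (f ν) := by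
  rw [← Complex.mul_conj', map_sum, sum_mul_sum]

noncomputable def evalPoly {r : ℕ} (c : Fin r → ℂ) (z : ℂ) : ℂ := ∑ μ, c μ * z ^ (μ : ℕ)

lemma exists_mem_evalPoly_ne_zero {r : ℕ} {c : Fin r → ℂ} (hc : c ≠ 0) {S : Finset ℂ}
    (hS : r ≤ #S) : ∃ z ∈ S, evalPoly c z ≠ 0 := by
  obtain ⟨S', hS'S, hS'⟩ := exists_subset_card_eq hS
  let v : Fin r → ℂ := fun s => (S'.equivFinOfCardEq hS').symm s
  have hdet : (vandermonde v).det ≠ 0 := det_vandermonde_ne_zero_iff.mpr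
    (Subtype.val_injective.comp (S'.equivFinOfCardEq hS').symm.injective)
  by_contra! hzero
  refine hc (eq_zero_of_mulVec_eq_zero hdet (funext fun s => ?_))
  simpa [mulVec, dotProduct, evalPoly, mul_comm] using hzero (v s) (hS'S (Subtype.prop _))

namespace IsPrimitiveRoot

variable {n : ℕ} {ζ : ℂ} (hζ : IsPrimitiveRoot ζ n)
include hζ

lemma conj_mul_self (hn : n ≠ 0) : starRingEnd ℂ ζ * ζ = 1 := by
  rw [Complex.conj_mul', hζ.norm'_eq_one hn]
  simp

lemma sum_pow_mul_conj_pow {μ ν : ℕ} (hμ : μ < n) (hν : ν < n) :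
    ∑ j ∈ range n, (ζ ^ μ * starRingEnd ℂ ζ ^ ν) ^ j = if μ = ν then (n : ℂ) else 0 := by
  have hζζ := hζ.conj_mul_self (by omega)
  split_ifs with hμν
  · subst hμν
    simp [← mul_pow, mul_comm ζ, hζζ]
  · set ρ := ζ ^ μ * starRingEnd ℂ ζ ^ ν
    have hρn : ρ ^ n = 1 := by
      rw [mul_pow, ← pow_mul, ← pow_mul, mul_comm μ, mul_comm ν, pow_mul, pow_mul, ← map_pow,
        hζ.pow_eq_one]
      simp
    have hρ : ρ ≠ 1 := fun hρ => hμν <| hζ.pow_inj hμ hν <| by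
      calc ζ ^ μ = ρ * ζ ^ ν := by rw [mul_assoc, ← mul_pow, hζζ, one_pow, mul_one]
        _ = ζ ^ ν := by rw [hρ, one_mul]
    rw [geom_sum_eq hρ, hρn, sub_self, zero_div]

lemma sum_norm_evalPoly_sq {r : ℕ} (c : Fin r → ℂ) (hr : r ≤ n) :
    ∑ j ∈ range n, ‖evalPoly c (ζ ^ j)‖ ^ 2 = n * ∑ μ, ‖c μ‖ ^ 2 := by
  apply Complex.ofReal_injective
  push_cast
  calc ∑ j ∈ range n, (‖evalPoly c (ζ ^ j)‖ : ℂ) ^ 2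
      = ∑ μ, ∑ ν, c μ * starRingEnd ℂ (c ν) *
          ∑ j ∈ range n, (ζ ^ (μ : ℕ) * starRingEnd ℂ ζ ^ (ν : ℕ)) ^ j := by
        simp only [evalPoly, sq_norm_sum_eq_sum_sum_mul_conj, mul_sum]
        refine sum_comm.trans <| sum_congr rfl fun μ _ => sum_comm.trans <|
          sum_congr rfl fun ν _ => sum_congr rfl fun j _ => ?_
        simp only [map_mul, map_pow]
        ring
    _ = ∑ μ, c μ * starRingEnd ℂ (c μ) * n := by
        refine sum_congr rfl fun μ _ => ?_
        simp_rw [hζ.sum_pow_mul_conj_pow (μ.2.trans_le hr) (Fin.is_lt _ |>.trans_le hr),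
          Fin.val_inj, mul_ite, mul_zero, sum_ite_eq, mem_univ, if_true]
    _ = n * ∑ μ, (‖c μ‖ : ℂ) ^ 2 := by
        simp_rw [mul_sum, ← Complex.mul_conj', mul_comm]

lemma sum_norm_evalPoly_sq_lt {r : ℕ} {c : Fin r → ℂ} (hc : c ≠ 0) {T : Finset ℕ}
    (hT : T ⊆ range n) (hTr : #T + r ≤ n) :
    ∑ j ∈ T, ‖evalPoly c (ζ ^ j)‖ ^ 2 < n * ∑ μ, ‖c μ‖ ^ 2 := by
  have hinj : Set.InjOn (ζ ^ ·) (range n : Set ℕ) := fun i hi j hj =>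
    hζ.pow_inj (mem_range.mp hi) (mem_range.mp hj)
  have hcard : r ≤ #((range n \ T).image (ζ ^ ·)) := by
    rw [card_image_of_injOn (hinj.mono (by simp)), card_sdiff_of_subset hT, card_range]
    omega
  obtain ⟨z, hz, hcz⟩ := exists_mem_evalPoly_ne_zero hc hcard
  obtain ⟨j, hj, rfl⟩ := mem_image.mp hz
  have hpos : 0 < ∑ j ∈ range n \ T, ‖evalPoly c (ζ ^ j)‖ ^ 2 :=
    sum_pos' (fun _ _ => by positivity) ⟨j, hj, by positivity⟩
  rw [← hζ.sum_norm_evalPoly_sq c (by omega), ← sum_sdiff hT]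
  linarith

lemma sum_range_norm_evalPoly_sq_lt {r k : ℕ} {c : Fin r → ℂ} (hc : c ≠ 0) (hkr : k + r < n) :
    ∑ i ∈ range (k + 1), ‖evalPoly c ((ζ ^ 2) ^ i)‖ ^ 2 < n * ∑ μ, ‖c μ‖ ^ 2 := by
  rcases Nat.even_or_odd n with ⟨m, rfl⟩ | hodd
  · by_cases hkm : k < m
    · have h := hζ.sum_norm_evalPoly_sq_lt hc (T := (range (k + 1)).image (2 * ·))
        (fun j hj => by grind) (by grind [card_image_le, card_range])
      rw [sum_image (fun i _ j _ h => by simpa using h)] at h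
      simpa only [pow_mul] using h
    · have hζ2 : IsPrimitiveRoot (ζ ^ 2) m := hζ.pow (by omega) (by omega)
      have h := hζ2.sum_norm_evalPoly_sq_lt hc (T := range (k + 1 - m))
        (range_subset_range.mpr (by omega)) (by rw [card_range]; omega)
      rw [show k + 1 = m + (k + 1 - m) by omega, sum_range_add,
        hζ2.sum_norm_evalPoly_sq c (by omega)]
      simp_rw [pow_add, hζ2.pow_eq_one, one_mul]
      push_cast
      linarith
  · exact (hζ.pow_of_coprime 2 (Nat.coprime_two_left.mpr hodd)).sum_norm_evalPoly_sq_lt hc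
      (range_subset_range.mpr (by omega)) (by rw [card_range]; omega)

end IsPrimitiveRoot

lemma Matrix.mem_Ioc_of_mem_spectrum {n : Type*} [Fintype n] [DecidableEq n]
    {A : Matrix n n ℝ} {a b μ : ℝ}
    (hA : ∀ x ≠ 0, x ⬝ᵥ (A *ᵥ x) ∈ Set.Ioc (a * (x ⬝ᵥ x)) (b * (x ⬝ᵥ x)))
    (hμ : μ ∈ spectrum ℝ A) : μ ∈ Set.Ioc a b := by
  rw [← spectrum_toLin', ← Module.End.hasEigenvalue_iff_mem_spectrum] at hμ
  obtain ⟨v, hv⟩ := hμ.exists_hasEigenvector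
  have hAv : A *ᵥ v = μ • v := by rw [← toLin'_apply, hv.apply_eq_smul]
  have hvv : 0 < v ⬝ᵥ v := (Fintype.sum_nonneg fun i => mul_self_nonneg (v i)).lt_of_ne
    (Ne.symm (dotProduct_self_eq_zero.not.mpr hv.2))
  obtain ⟨hlo, hhi⟩ := hA v hv.2
  rw [hAv, dotProduct_smul, smul_eq_mul] at hlo hhi
  exact ⟨lt_of_mul_lt_mul_right hlo hvv.le, le_of_mul_le_mul_right hhi hvv⟩

noncomputable def unitRoot (N : ℕ) : ℂ := Complex.exp (2 * π * Complex.I / N)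

lemma conj_unitRoot (N : ℕ) :
    starRingEnd ℂ (unitRoot N) = Complex.exp (-(2 * π * Complex.I / N)) := by
  rw [unitRoot, ← Complex.exp_conj]
  simp [Complex.conj_ofReal, map_ofNat, neg_div]

lemma conj_unitRoot_mul_self (N : ℕ) : starRingEnd ℂ (unitRoot N) * unitRoot N = 1 := by
  rw [conj_unitRoot, unitRoot, ← Complex.exp_add, neg_add_cancel, Complex.exp_zero]

lemma unitRoot_pow_mul_conj_pow (N m n : ℕ) :
    unitRoot N ^ m * starRingEnd ℂ (unitRoot N) ^ n
      = Complex.exp ((2 * π * ((m : ℝ) - n) / N : ℝ) * Complex.I) := by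
  rw [conj_unitRoot, unitRoot, ← Complex.exp_nat_mul, ← Complex.exp_nat_mul, ← Complex.exp_add]
  congr 1
  push_cast
  ring

lemma Bmat_apply_eq_sum (N k r : ℕ) (μ ν : Fin r) :
    ((Bmat N k r μ ν : ℝ) : ℂ) = ∑ i ∈ range (k + 1),
      (starRingEnd ℂ (unitRoot N) ^ k * (unitRoot N ^ 2) ^ i) ^ (μ : ℕ) *
        starRingEnd ℂ ((starRingEnd ℂ (unitRoot N) ^ k * (unitRoot N ^ 2) ^ i) ^ (ν : ℕ)) := by
  set ω := unitRoot N
  set θ : ℝ := 2 * π * ((μ : ℝ) - (ν : ℝ)) / N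
  have hu : Complex.exp (θ * Complex.I) = ω ^ (μ : ℕ) * starRingEnd ℂ ω ^ (ν : ℕ) :=
    (unitRoot_pow_mul_conj_pow N μ ν).symm
  have hv : Complex.exp (-θ * Complex.I) = starRingEnd ℂ ω ^ (μ : ℕ) * ω ^ (ν : ℕ) := by
    rw [show -(θ : ℂ) * Complex.I = starRingEnd ℂ (θ * Complex.I) by simp [Complex.conj_ofReal],
      Complex.exp_conj, hu]
    simp [mul_comm]
  have huv : (ω ^ (μ : ℕ) * starRingEnd ℂ ω ^ (ν : ℕ)) * (starRingEnd ℂ ω ^ (μ : ℕ) * ω ^ (ν : ℕ))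
      = 1 := by
    calc _ = (starRingEnd ℂ ω * ω) ^ (μ : ℕ) * (starRingEnd ℂ ω * ω) ^ (ν : ℕ) := by ring
      _ = 1 := by simp [ω, conj_unitRoot_mul_self]
  rw [Bmat, chebU, Chebyshev.complex_ofReal_eval_U, Complex.ofReal_cos,
    Chebyshev.U_eval_eq_pow_mul_geom_sum huv (by rw [Complex.two_cos, hu, hv])]
  simp only [mul_sum, map_mul, map_pow, Complex.conj_conj]
  exact sum_congr rfl fun i _ => by ring

lemma dotProduct_Bmat_mulVec (N k : ℕ) {r : ℕ} (x : Fin r → ℝ) :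
    x ⬝ᵥ (Bmat N k r *ᵥ x) = ∑ i ∈ range (k + 1),
      ‖evalPoly (fun μ => x μ * (starRingEnd ℂ (unitRoot N) ^ k) ^ (μ : ℕ))
        ((unitRoot N ^ 2) ^ i)‖ ^ 2 := by
  apply Complex.ofReal_injective
  simp only [evalPoly, dotProduct, mulVec]
  push_cast
  simp only [sq_norm_sum_eq_sum_sum_mul_conj, Bmat_apply_eq_sum, mul_sum, sum_mul]
  refine (sum_congr rfl fun μ _ => sum_comm).trans <| sum_comm.trans <|
    sum_congr rfl fun i _ => sum_congr rfl fun μ _ => sum_congr rfl fun ν _ => ?_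
  simp only [map_mul, map_pow, Complex.conj_ofReal]
  ring

lemma dotProduct_Bmat_mulVec_nonneg (N k : ℕ) {r : ℕ} (x : Fin r → ℝ) :
    0 ≤ x ⬝ᵥ (Bmat N k r *ᵥ x) := by
  rw [dotProduct_Bmat_mulVec]
  positivity

lemma dotProduct_Bmat_mulVec_lt {N k r : ℕ} {x : Fin r → ℝ} (hx : x ≠ 0) (hkr : k + r < N) :
    x ⬝ᵥ (Bmat N k r *ᵥ x) < N * (x ⬝ᵥ x) := by
  have hω : IsPrimitiveRoot (unitRoot N) N := Complex.isPrimitiveRoot_exp N (by omega)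
  have hω1 : ‖unitRoot N‖ = 1 := hω.norm'_eq_one (by omega)
  set c : Fin r → ℂ := fun μ => x μ * (starRingEnd ℂ (unitRoot N) ^ k) ^ (μ : ℕ)
  have hc : c ≠ 0 := by
    obtain ⟨μ, hμ⟩ := Function.ne_iff.mp hx
    refine Function.ne_iff.mpr ⟨μ, mul_ne_zero (by exact_mod_cast hμ) ?_⟩
    exact pow_ne_zero _ (pow_ne_zero _ ((_root_.map_ne_zero _).mpr (hω.ne_zero (by omega))))
  have hcx : ∑ μ, ‖c μ‖ ^ 2 = x ⬝ᵥ x := by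
    simp [c, dotProduct, hω1, sq]
  rw [dotProduct_Bmat_mulVec, ← hcx]
  exact hω.sum_range_norm_evalPoly_sq_lt hc hkr

lemma Bmat_isHermitian (N k r : ℕ) : (Bmat N k r).IsHermitian := by
  ext μ ν
  simp only [conjTranspose_apply, star_trivial, Bmat]
  rw [← Real.cos_neg]
  congr 2
  ring

lemma Amat_eq (η : ℝ → ℝ) (N k r : ℕ) :
    Amat η N k r = 1 - (η (k / N) / N) • Bmat N k r := by
  rw [Amat, Mmat, sub_sub_cancel, smul_smul, ← div_eq_mul_inv]

lemma Amat_isHermitian (η : ℝ → ℝ) (N k r : ℕ) : (Amat η N k r).IsHermitian := by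
  rw [Amat_eq]
  exact isHermitian_one.sub ((Bmat_isHermitian N k r).smul (IsSelfAdjoint.all _))

lemma dotProduct_Amat_mulVec_mem_Ioc {η : ℝ → ℝ} {N k r : ℕ} (hη : η (k / N) ∈ Set.Icc 0 1)
    {x : Fin r → ℝ} (hx : x ≠ 0) (hkr : k + r < N) :
    x ⬝ᵥ (Amat η N k r *ᵥ x) ∈ Set.Ioc 0 (x ⬝ᵥ x) := by
  have hN : (0 : ℝ) < N := by exact_mod_cast (show 0 < N by omega)
  have hq₀ := dotProduct_Bmat_mulVec_nonneg N k x
  have hq₁ := dotProduct_Bmat_mulVec_lt hx hkr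
  have hlt : η (k / N) / N * (x ⬝ᵥ (Bmat N k r *ᵥ x)) < x ⬝ᵥ x := by
    rw [div_mul_eq_mul_div, div_lt_iff₀ hN, mul_comm (x ⬝ᵥ x)]
    exact (mul_le_of_le_one_left hq₀ hη.2).trans_lt hq₁
  rw [Amat_eq, sub_mulVec, one_mulVec, smul_mulVec, dotProduct_sub, dotProduct_smul, smul_eq_mul]
  exact ⟨sub_pos.mpr hlt, sub_le_self _ (mul_nonneg (div_nonneg hη.1 hN.le) hq₀)⟩

theorem Amat_posDef_of_lt_general (η : ℝ → ℝ)
    (hη01 : ∀ t : ℝ, 0 ≤ t → 0 ≤ η t ∧ η t ≤ 1)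
    (N k r : ℕ) (h : k + r < N) :
    (Amat η N k r).PosDef ∧
      ∀ μ ∈ spectrum ℝ (Amat η N k r), μ ∈ Set.Ioc (0 : ℝ) 1 := by
  have hquad : ∀ x ≠ 0, x ⬝ᵥ (Amat η N k r *ᵥ x) ∈ Set.Ioc 0 (x ⬝ᵥ x) := fun x hx =>
    dotProduct_Amat_mulVec_mem_Ioc (hη01 _ (by positivity)) hx h
  refine ⟨posDef_iff_dotProduct_mulVec.mpr ⟨Amat_isHermitian η N k r, fun x hx => ?_⟩,
    fun μ => mem_Ioc_of_mem_spectrum fun x hx => ?_⟩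
  · simpa using (hquad x hx).1
  · simpa using hquad x hx

theorem Amat_posDef_of_lt (η : ℝ → ℝ) (τ : ℝ) (hτ : 0 < τ) (hτ1 : τ < 1)
    (hη1 : ∀ t ∈ Set.Icc 0 τ, η t = 1)
    (hη01 : ∀ t : ℝ, 0 ≤ t → 0 ≤ η t ∧ η t ≤ 1)
    (hηdec : StrictAntiOn η (Set.Icc τ 1))
    (N k r : ℕ) (hk : k ≤ N - 1) (hr : r ≤ N - 1) (h : k + r < N) :
    (Amat η N k r).PosDef ∧
      ∀ μ ∈ spectrum ℝ (Amat η N k r), μ ∈ Set.Ioc (0 : ℝ) 1 :=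
  Amat_posDef_of_lt_general η hη01 N k r h
end
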